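/- arXiv:2202.01048 — 2 statements merged into one kernel-verified Lean document; each statement's English description precedes it below -/
import Mathlib

section
/- Let (β_i)_{i ∈ ι} be a family of types and let F be the free group on the sigma type Σ i, β_i. For each i ∈ ι let H_i be the subgroup of F generated by the set {FreeGroup.of ⟨i, b⟩ : b ∈ β_i}. Then (H_i)_{i ∈ ι} is a malnormal collection in F: for all i, j ∈ ι and all g ∈ F, if g H_i g⁻¹ ∩ H_j ≠ {1}, then i = j and g ∈ H_i. -/
/-- The conjugate subgroup `g H g⁻¹`. -/
def conjSubgroup {G : Type*} [Group G] (g : G) (H : Subgroup G) : Subgroup G :=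
  H.map (MulAut.conj g).toMonoidHom

/-- A family of subgroups is a malnormal collection if
`g H i g⁻¹ ∩ H j ≠ {1}` implies `i = j` and `g ∈ H i`. -/
def IsMalnormalCollection {G : Type*} [Group G] {ι : Type*} (H : ι → Subgroup G) : Prop :=
  ∀ (i j : ι) (g : G), conjSubgroup g (H i) ⊓ H j ≠ ⊥ → i = j ∧ g ∈ H i

/-!
Let `H i` be generated by the letters of `S i`, where the sets `S i` are pairwise disjoint.
Write `g = a * t`, where `t` is the longest suffix of the reduced word of `g` spelled in
letters of `S i`, so that `t ∈ H i` and `a` ends in a letter outside `S i`. For `1 ≠ h ∈ H i`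
the element `x = t h t⁻¹` is again a nontrivial element of `H i`, and `g h g⁻¹ = a x a⁻¹` is
already reduced as written, because `a` ends and `a⁻¹` starts outside `S i` while `x` is
spelled in `S i`. If it lies in `H j`, all its letters lie in `S j`: a letter of `x` gives
`i = j` by disjointness, and then the last letter of `a` forces `a = []`, i.e. `g = t ∈ H i`.
-/

theorem conjSubgroup_inf_ne_bot_iff {G : Type*} [Group G] {g : G} {H K : Subgroup G} :
    conjSubgroup g H ⊓ K ≠ ⊥ ↔ ∃ h ∈ H, h ≠ 1 ∧ g * h * g⁻¹ ∈ K := by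
  simp only [Subgroup.ne_bot_iff_exists_ne_one, conjSubgroup, Subtype.exists, Subgroup.mem_inf,
    Subgroup.mem_map, MulEquiv.coe_toMonoidHom, MulAut.conj_apply, ne_eq, Subgroup.mk_eq_one]
  constructor
  · rintro ⟨_, ⟨⟨h, hH, rfl⟩, hK⟩, h1⟩
    exact ⟨h, hH, by simpa using h1, hK⟩
  · rintro ⟨h, hH, h1, hK⟩
    exact ⟨_, ⟨⟨h, hH, rfl⟩, hK⟩, by simpa using h1⟩

namespace FreeGroup

variable {α : Type*} {S : Set α}

section Words

open List

theorem IsReduced.invRev {L : List (α × Bool)} (h : IsReduced L) : IsReduced (invRev L) := by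
  refine isChain_reverse.2 ((isChain_map _).2 (h.imp ?_))
  rintro a b hab hba
  simpa using (hab (by simpa using hba.symm)).symm

theorem IsReduced.append_of_fst_ne {L₁ L₂ : List (α × Bool)} (h₁ : IsReduced L₁)
    (h₂ : IsReduced L₂) (h : ∀ a ∈ L₁.getLast?, ∀ b ∈ L₂.head?, a.1 ≠ b.1) :
    IsReduced (L₁ ++ L₂) :=
  isChain_append.2 ⟨h₁, h₂, fun a ha b hb hab => absurd hab (h a ha b hb)⟩

theorem isReduced_append_append_invRev {a u : List (α × Bool)} (ha : IsReduced a)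
    (haS : ∀ l ∈ a.getLast?, l.1 ∉ S) (hu : IsReduced u) (hu₀ : u ≠ [])
    (huS : ∀ l ∈ u, l.1 ∈ S) : IsReduced (a ++ u ++ invRev a) := by
  refine IsReduced.append_overlap ?_ ?_ hu₀
  · refine ha.append_of_fst_ne hu fun x hx y hy hxy => haS x hx ?_
    exact hxy ▸ huS y (mem_of_mem_head? hy)
  · refine hu.append_of_fst_ne ha.invRev fun x hx y hy hxy => ?_
    rw [invRev, head?_reverse, getLast?_map, Option.mem_map] at hy
    obtain ⟨z, hz, rfl⟩ := hy
    exact haS z hz (hxy ▸ huS x (mem_of_mem_getLast? hx))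

theorem mk_mem_closure_image_of {L : List (α × Bool)} (hL : ∀ l ∈ L, l.1 ∈ S) :
    mk L ∈ Subgroup.closure (of '' S) := by
  induction L with
  | nil => exact Subgroup.one_mem _
  | cons l L ih =>
    obtain ⟨x, b⟩ := l
    rw [← singleton_append, ← mul_mk]
    refine Subgroup.mul_mem _ ?_ (ih fun l hl => hL l (mem_cons_of_mem _ hl))
    have hof : of x ∈ Subgroup.closure (of '' S) :=
      Subgroup.subset_closure ⟨x, hL _ mem_cons_self, rfl⟩
    cases b
    · exact Subgroup.inv_mem _ hof
    · exact hof

theorem mem_closure_image_of_iff [DecidableEq α] {x : FreeGroup α} :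
    x ∈ Subgroup.closure (of '' S) ↔ ∀ l ∈ x.toWord, l.1 ∈ S := by
  refine ⟨fun hx => ?_, fun hx => mk_toWord (x := x) ▸ mk_mem_closure_image_of hx⟩
  induction hx using Subgroup.closure_induction with
  | mem x hx =>
    obtain ⟨a, ha, rfl⟩ := hx
    simpa [toWord_of] using ha
  | one => simp
  | mul x y _ _ hx hy =>
    intro l hl
    exact (mem_append.1 ((toWord_mul_sublist x y).subset hl)).elim (hx l) (hy l)
  | inv x _ hx =>
    intro l hl
    rw [toWord_inv, invRev, mem_reverse, mem_map] at hl
    obtain ⟨l, hl, rfl⟩ := hl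
    exact hx l hl

theorem exists_eq_mk_mul_mem_closure_image_of (S : Set α) (g : FreeGroup α) :
    ∃ a t, IsReduced a ∧ (∀ l ∈ a.getLast?, l.1 ∉ S) ∧
      t ∈ Subgroup.closure (of '' S) ∧ g = mk a * t := by
  classical
  let p : α × Bool → Bool := fun l => decide (l.1 ∈ S)
  refine ⟨g.toWord.rdropWhile p, mk (g.toWord.rtakeWhile p), ?_, ?_, ?_, ?_⟩
  · exact isReduced_toWord.infix (rdropWhile_prefix p _).isInfix
  · intro l hl
    have hne : g.toWord.rdropWhile p ≠ [] := by rintro h; simp [h] at hl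
    rw [getLast?_eq_some_getLast hne, Option.mem_some_iff] at hl
    simpa [p, ← hl] using rdropWhile_last_not p _ hne
  · exact mk_mem_closure_image_of fun l hl => by simpa [p] using mem_rtakeWhile_imp hl
  · rw [mul_mk, rdropWhile_append_rtakeWhile, mk_toWord]

end Words

theorem isMalnormalCollection_closure_image_of {ι : Type*} {S : ι → Set α}
    (hS : Pairwise (Function.onFun Disjoint S)) :
    IsMalnormalCollection fun i => Subgroup.closure (of '' S i) := by
  classical
  intro i j g hne
  obtain ⟨h, hh, h1, hj⟩ := conjSubgroup_inf_ne_bot_iff.1 hne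
  obtain ⟨a, t, ha, haS, ht, rfl⟩ := exists_eq_mk_mul_mem_closure_image_of (S i) g
  set x := t * h * t⁻¹
  have hx : x ∈ Subgroup.closure (of '' S i) :=
    Subgroup.mul_mem _ (Subgroup.mul_mem _ ht hh) (Subgroup.inv_mem _ ht)
  have hx₀ : x.toWord ≠ [] := by simpa [x, toWord_eq_nil_iff] using h1
  have hconj : mk a * t * h * (mk a * t)⁻¹ = mk (a ++ x.toWord ++ invRev a) := by
    rw [← mul_mk, ← mul_mk, ← inv_mk, mk_toWord]
    simp only [x]
    group
  have hword : (mk a * t * h * (mk a * t)⁻¹).toWord = a ++ x.toWord ++ invRev a := by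
    rw [hconj, toWord_mk, IsReduced.reduce_eq]
    exact isReduced_append_append_invRev ha haS isReduced_toWord hx₀
      (mem_closure_image_of_iff.1 hx)
  have hletters : ∀ l ∈ a ++ x.toWord ++ invRev a, l.1 ∈ S j :=
    hword ▸ mem_closure_image_of_iff.1 hj
  obtain ⟨l, hl⟩ := List.exists_mem_of_ne_nil _ hx₀
  obtain rfl : i = j := hS.eq <| Set.not_disjoint_iff.2
    ⟨l.1, mem_closure_image_of_iff.1 hx l hl, hletters l (by simp [hl])⟩
  obtain rfl : a = [] := by
    by_contra ha₀
    exact haS _ (List.getLast_mem_getLast? ha₀) (hletters _ (by simp [List.getLast_mem ha₀]))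
  refine ⟨rfl, ?_⟩
  rwa [← one_eq_mk, one_mul]

end FreeGroup

/-- In a free group on `Σ i, β i`, the subgroups generated by the pairwise disjoint
pieces of the free basis form a malnormal collection. -/
theorem freeGroup_disjoint_basis_malnormalCollection {ι : Type*} (β : ι → Type*) :
    IsMalnormalCollection
      (fun i : ι => Subgroup.closure
        (Set.range fun b : β i => FreeGroup.of (⟨i, b⟩ : Σ i, β i))) := by
  have hS : Pairwise (Function.onFun Disjoint fun i => Set.range (Sigma.mk (β := β) i)) :=
    fun i j hij => by
      simpa [Function.onFun, Set.range_sigmaMk] using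
        (Set.disjoint_singleton.2 hij).preimage Sigma.fst
  simpa only [← Set.range_comp, Function.comp_def] using
    FreeGroup.isMalnormalCollection_closure_image_of hS
end

section
/- Let G be a group and x : Fin m → G a family of elements generating G (the subgroup closure of the range of x is all of G). Let r : Fin k → FreeGroup (Fin s) be a family of relators and let Q = PresentedGroup (range r) be the group presented by generators a₁, …, a_s and relators r₁, …, r_k. Let P = G ∗ FreeGroup (Fin s) be the free product, with canonical injections inl : G → P and inr : FreeGroup (Fin s) → P, and write a_i = inr (FreeGroup.of i). Let w : Fin k → G, w' : Fin s → Fin m → G, and w'' : Fin s → Fin m → G be arbitrary families of elements of G, and let R be the normal closure in P of the set consisting of the elements inr(r_ℓ) · inl(w_ℓ) for ℓ ∈ Fin k, the elements a_i · inl(x_j) · a_i⁻¹ · inl(w'_{ij}) for i ∈ Fin s, j ∈ Fin m, and the elements a_i⁻¹ · inl(x_j) · a_i · inl(w''_{ij}) for i ∈ Fin s, j ∈ Fin m. Let Γ = P ⧸ R with quotient map π : P → Γ, and let N be the range of the composite homomorphism π ∘ inl : G → Γ. Then: (i) N is a normal subgroup of Γ; and (ii) there exists a surjective group homomorphism φ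 : Γ → Q whose kernel is exactly N. In particular there is a short exact sequence 1 → N → Γ → Q → 1 in which N is a quotient of G. -/
/-!
Conjugation by a generator `aᵢ^{±1}` of the free factor sends each generator `xⱼ` of `G` into
the image `N` of `G` (this is what the relators `aᵢ xⱼ aᵢ⁻¹ w'ᵢⱼ` and `aᵢ⁻¹ xⱼ aᵢ w''ᵢⱼ` say),
hence sends all of `N` into `N`; since `Γ` is generated by `N` and the `aᵢ`, `N` is normal.
Killing `G` maps `Γ` onto `Q`, and conversely `aᵢ ↦ aᵢ N` defines `Q → Γ ⧸ N`, because each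
relator `rℓ` equals `wℓ⁻¹ ∈ N` in `Γ`. The composite `Γ → Q → Γ ⧸ N` is the quotient map, so
the kernel of `Γ → Q` is `N`.
-/

open Monoid

/-- The Rips-type relators in the free product `G ∗ FreeGroup (Fin s)`:
the elements `r ℓ · w ℓ`, `aᵢ xⱼ aᵢ⁻¹ · w'ᵢⱼ` and `aᵢ⁻¹ xⱼ aᵢ · w''ᵢⱼ`,
where `aᵢ` denotes the `i`-th generator of the free factor `FreeGroup (Fin s)`. -/
def ripsRelators {G : Type*} [Group G] {m k s : ℕ} (x : Fin m → G)
    (r : Fin k → FreeGroup (Fin s)) (w : Fin k → G) (w' w'' : Fin s → Fin m → G) :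
    Set (Coprod G (FreeGroup (Fin s))) :=
  (Set.range fun ℓ : Fin k => Coprod.inr (r ℓ) * Coprod.inl (w ℓ)) ∪
  (Set.range fun p : Fin s × Fin m =>
    Coprod.inr (FreeGroup.of p.1) * Coprod.inl (x p.2) *
      (Coprod.inr (FreeGroup.of p.1))⁻¹ * Coprod.inl (w' p.1 p.2)) ∪
  (Set.range fun p : Fin s × Fin m =>
    (Coprod.inr (FreeGroup.of p.1))⁻¹ * Coprod.inl (x p.2) *
      Coprod.inr (FreeGroup.of p.1) * Coprod.inl (w'' p.1 p.2))

section General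

variable {Γ : Type*} [Group Γ]

theorem Subgroup.mem_normalizer_of_conj_mem {H : Subgroup Γ} {t : Γ}
    (h₁ : ∀ n ∈ H, t * n * t⁻¹ ∈ H) (h₂ : ∀ n ∈ H, t⁻¹ * n * t ∈ H) :
    t ∈ Subgroup.normalizer (H : Set Γ) :=
  Subgroup.mem_normalizer_iff.2 fun n => ⟨h₁ n, fun h => by simpa [mul_assoc] using h₂ _ h⟩

theorem MonoidHom.conj_mem_range_of_closure_eq_top {G ι : Type*} [Group G] {x : ι → G}
    (hx : Subgroup.closure (Set.range x) = ⊤) (f : G →* Γ) {t : Γ}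
    (ht : ∀ j, t * f (x j) * t⁻¹ ∈ f.range) {n : Γ} (hn : n ∈ f.range) :
    t * n * t⁻¹ ∈ f.range := by
  have hmap : (Subgroup.closure (Set.range x)).map ((MulAut.conj t).toMonoidHom.comp f) ≤
      f.range := by
    rw [MonoidHom.map_closure, Subgroup.closure_le]
    rintro _ ⟨_, ⟨j, rfl⟩, rfl⟩
    exact ht j
  obtain ⟨g, rfl⟩ := hn
  exact hmap ⟨g, hx ▸ Subgroup.mem_top g, rfl⟩

theorem MonoidHom.ker_le_of_comp_eq_mk' {Q : Type*} [Group Q] {N : Subgroup Γ} [N.Normal]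
    {φ : Γ →* Q} {ψ : Q →* Γ ⧸ N} (h : ψ.comp φ = QuotientGroup.mk' N) : φ.ker ≤ N := by
  intro γ hγ
  rw [← QuotientGroup.ker_mk' N, ← h, MonoidHom.mem_ker, MonoidHom.comp_apply, hγ, map_one]

end General

section Rips

variable {G : Type*} [Group G] {m k s : ℕ} (x : Fin m → G)
  (r : Fin k → FreeGroup (Fin s)) (w : Fin k → G) (w' w'' : Fin s → Fin m → G)

abbrev RipsGroup : Type _ :=
  Coprod G (FreeGroup (Fin s)) ⧸ Subgroup.normalClosure (ripsRelators x r w w' w'')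

def ripsInl : G →* RipsGroup x r w w' w'' := (QuotientGroup.mk' _).comp Coprod.inl

def ripsInr : FreeGroup (Fin s) →* RipsGroup x r w w' w'' := (QuotientGroup.mk' _).comp Coprod.inr

theorem mk'_eq_one_of_mem_ripsRelators {p : Coprod G (FreeGroup (Fin s))}
    (hp : p ∈ ripsRelators x r w w' w'') : QuotientGroup.mk' _ p = (1 : RipsGroup x r w w' w'') :=
  (QuotientGroup.eq_one_iff p).2 (Subgroup.subset_normalClosure hp)

theorem ripsInr_relator (ℓ : Fin k) :
    ripsInr x r w w' w'' (r ℓ) = (ripsInl x r w w' w'' (w ℓ))⁻¹ :=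
  eq_inv_of_mul_eq_one_left <| by
    simpa [ripsInl, ripsInr] using
      mk'_eq_one_of_mem_ripsRelators x r w w' w'' (Or.inl (Or.inl ⟨ℓ, rfl⟩))

theorem ripsInr_of_conj (i : Fin s) (j : Fin m) :
    ripsInr x r w w' w'' (.of i) * ripsInl x r w w' w'' (x j) * (ripsInr x r w w' w'' (.of i))⁻¹ =
      (ripsInl x r w w' w'' (w' i j))⁻¹ :=
  eq_inv_of_mul_eq_one_left <| by
    simpa [ripsInl, ripsInr] using
      mk'_eq_one_of_mem_ripsRelators x r w w' w'' (Or.inl (Or.inr ⟨(i, j), rfl⟩))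

theorem ripsInr_of_inv_conj (i : Fin s) (j : Fin m) :
    (ripsInr x r w w' w'' (.of i))⁻¹ * ripsInl x r w w' w'' (x j) * ripsInr x r w w' w'' (.of i) =
      (ripsInl x r w w' w'' (w'' i j))⁻¹ :=
  eq_inv_of_mul_eq_one_left <| by
    simpa [ripsInl, ripsInr] using
      mk'_eq_one_of_mem_ripsRelators x r w w' w'' (Or.inr ⟨(i, j), rfl⟩)

theorem ripsInl_range_sup_ripsInr_range :
    (ripsInl x r w w' w'').range ⊔ (ripsInr x r w w' w'').range = ⊤ := by
  rw [ripsInl, ripsInr, MonoidHom.range_comp, MonoidHom.range_comp, ← Subgroup.map_sup,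
    Coprod.range_inl_sup_range_inr, ← MonoidHom.range_eq_map,
    MonoidHom.range_eq_top_of_surjective _ (QuotientGroup.mk'_surjective _)]

theorem ripsInl_range_normal (hx : Subgroup.closure (Set.range x) = ⊤) :
    (ripsInl x r w w' w'').range.Normal := by
  set N := (ripsInl x r w w' w'').range
  have hgen : ∀ i, ripsInr x r w w' w'' (.of i) ∈ Subgroup.normalizer (N : Set _) := fun i =>
    Subgroup.mem_normalizer_of_conj_mem
      (fun _ hn => (ripsInl x r w w' w'').conj_mem_range_of_closure_eq_top hx
        (fun j => by rw [ripsInr_of_conj]; exact inv_mem ⟨_, rfl⟩) hn)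
      (fun _ hn => by
        have h := (ripsInl x r w w' w'').conj_mem_range_of_closure_eq_top hx
          (t := (ripsInr x r w w' w'' (.of i))⁻¹)
          (fun j => by rw [inv_inv, ripsInr_of_inv_conj]; exact inv_mem ⟨_, rfl⟩) hn
        rwa [inv_inv] at h)
  have hinr : (ripsInr x r w w' w'').range ≤ Subgroup.normalizer (N : Set _) := by
    rw [MonoidHom.range_eq_map, ← FreeGroup.closure_range_of, MonoidHom.map_closure,
      Subgroup.closure_le]
    rintro _ ⟨_, ⟨i, rfl⟩, rfl⟩
    exact hgen i
  rw [← Subgroup.normalizer_eq_top_iff, eq_top_iff, ← ripsInl_range_sup_ripsInr_range]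
  exact sup_le Subgroup.le_normalizer hinr

def ripsToPresented : RipsGroup x r w w' w'' →* PresentedGroup (Set.range r) :=
  QuotientGroup.lift _ (Coprod.lift 1 (PresentedGroup.mk _)) <|
    Subgroup.normalClosure_le_normal <| by
      rintro p (⟨⟨ℓ, rfl⟩ | ⟨q, rfl⟩⟩ | ⟨q, rfl⟩) <;>
        simp [PresentedGroup.one_of_mem]

theorem ripsToPresented_ripsInl (g : G) :
    ripsToPresented x r w w' w'' (ripsInl x r w w' w'' g) = 1 := by
  simp [ripsToPresented, ripsInl]

theorem ripsToPresented_ripsInr (u : FreeGroup (Fin s)) :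
    ripsToPresented x r w w' w'' (ripsInr x r w w' w'' u) = PresentedGroup.mk _ u := by
  simp [ripsToPresented, ripsInr]

theorem ripsToPresented_surjective : Function.Surjective (ripsToPresented x r w w' w'') := by
  intro q
  obtain ⟨u, rfl⟩ := PresentedGroup.mk_surjective _ q
  exact ⟨_, ripsToPresented_ripsInr x r w w' w'' u⟩

section Retraction

variable [(ripsInl x r w w' w'').range.Normal]

def presentedToRipsQuotient :
    PresentedGroup (Set.range r) →* RipsGroup x r w w' w'' ⧸ (ripsInl x r w w' w'').range :=
  PresentedGroup.toGroup (f := fun i => QuotientGroup.mk' _ (ripsInr x r w w' w'' (.of i))) <| by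
    rintro _ ⟨ℓ, rfl⟩
    have hlift : FreeGroup.lift (fun i => QuotientGroup.mk' _ (ripsInr x r w w' w'' (.of i))) =
        (QuotientGroup.mk' (ripsInl x r w w' w'').range).comp (ripsInr x r w w' w'') :=
      FreeGroup.ext_hom _ _ fun _ => by simp
    rw [hlift, MonoidHom.comp_apply, ripsInr_relator, map_inv, inv_eq_one,
      QuotientGroup.mk'_apply, QuotientGroup.eq_one_iff]
    exact ⟨_, rfl⟩

theorem presentedToRipsQuotient_comp_ripsToPresented :
    (presentedToRipsQuotient x r w w' w'').comp (ripsToPresented x r w w' w'') =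
      QuotientGroup.mk' _ := by
  refine QuotientGroup.monoidHom_ext _ (Coprod.hom_ext ?_ (FreeGroup.ext_hom _ _ fun i => ?_))
  · ext g
    change presentedToRipsQuotient x r w w' w'' (ripsToPresented x r w w' w''
      (ripsInl x r w w' w'' g)) = QuotientGroup.mk' _ (ripsInl x r w w' w'' g)
    rw [ripsToPresented_ripsInl, map_one, eq_comm, QuotientGroup.mk'_apply,
      QuotientGroup.eq_one_iff]
    exact ⟨g, rfl⟩
  · change presentedToRipsQuotient x r w w' w'' (ripsToPresented x r w w' w''
      (ripsInr x r w w' w'' (.of i))) = QuotientGroup.mk' _ (ripsInr x r w w' w'' (.of i))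
    rw [ripsToPresented_ripsInr]
    exact PresentedGroup.toGroup.of _

theorem ripsToPresented_ker :
    (ripsToPresented x r w w' w'').ker = (ripsInl x r w w' w'').range :=
  le_antisymm (MonoidHom.ker_le_of_comp_eq_mk' (presentedToRipsQuotient_comp_ripsToPresented ..))
    (by rintro _ ⟨g, rfl⟩; exact ripsToPresented_ripsInl x r w w' w'' g)

end Retraction

end Rips

/-- The group-theoretic content of Theorem 4.1: if `Γ` is the quotient of
`G ∗ FreeGroup (Fin s)` by the normal closure of the Rips-type relators, and `N` is the
image of `G` in `Γ`, then `N` is normal in `Γ` and there is a surjection `Γ → Q` onto the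
presented group `Q = ⟨a₁,…,a_s ∣ r₁,…,r_k⟩` with kernel exactly `N`, yielding a short
exact sequence `1 → N → Γ → Q → 1` in which `N` is a quotient of `G`. -/
theorem rips_exact_sequence {G : Type*} [Group G] {m k s : ℕ} (x : Fin m → G)
    (hx : Subgroup.closure (Set.range x) = ⊤)
    (r : Fin k → FreeGroup (Fin s)) (w : Fin k → G) (w' w'' : Fin s → Fin m → G)
    (N : Subgroup (Coprod G (FreeGroup (Fin s)) ⧸
      Subgroup.normalClosure (ripsRelators x r w w' w'')))
    (hN : N = ((QuotientGroup.mk' (Subgroup.normalClosure (ripsRelators x r w w' w''))).comp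
      Coprod.inl).range) :
    N.Normal ∧
    ∃ φ : (Coprod G (FreeGroup (Fin s)) ⧸
        Subgroup.normalClosure (ripsRelators x r w w' w'')) →* PresentedGroup (Set.range r),
      Function.Surjective φ ∧ φ.ker = N := by
  subst hN
  have hnormal := ripsInl_range_normal x r w w' w'' hx
  exact ⟨hnormal, ripsToPresented x r w w' w'', ripsToPresented_surjective x r w w' w'',
    ripsToPresented_ker x r w w' w''⟩
end
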